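/- Cocycle condition for the noncommutative K_{ℙ²} (gluing with trivial gerbe terms): extend the homomorphisms G_{21}, G_{32}, G_{13} of the previous statement to the double localizations, so that G_{21} : 𝒜_1⟨x_1^{-1}, y_1^{-1}⟩ → 𝒜_2⟨z_2^{-1}, y_2^{-1}⟩, G_{32} : 𝒜_2⟨z_2^{-1}, y_2^{-1}⟩ → 𝒜_3⟨x_3^{-1}, z_3^{-1}⟩ and G_{13} : 𝒜_3⟨x_3^{-1}, z_3^{-1}⟩ → 𝒜_1⟨y_1^{-1}, x_1^{-1}⟩. Then the composite G_{13} ∘ G_{32} ∘ G_{21} is the identity on 𝒜_1⟨x_1^{-1}, y_1^{-1}⟩; equivalently, G_{13}(G_{32}(G_{21}(u))) = u for u ∈ {x_1, y_1, w_1}. Hence the three charts 𝒜_1, 𝒜_2, 𝒜_3 together with the transition homomorphisms satisfy the cocycle condition G_{ij} ∘ G_{jk} = G_{ik} with trivial gerbe terms c_{ijk} = 1. -/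

import Mathlib

/-! Statement 17: cocycle condition for the noncommutative `K_{ℙ²}`. -/

/-- Generators `w₁, y₁, x₁` of `𝒜₁` together with adjoined inverses `x₁⁻¹, y₁⁻¹`. -/
inductive D1 : Type
  | w1 | y1 | x1 | xinv | yinv
deriving DecidableEq

/-- Generators `w₂, z₂, y₂` of `𝒜₂` together with adjoined inverses `z₂⁻¹, y₂⁻¹`. -/
inductive D2 : Type
  | w2 | z2 | y2 | zinv | yinv
deriving DecidableEq

/-- Generators `w₃, x₃, z₃` of `𝒜₃` together with adjoined inverses `x₃⁻¹, z₃⁻¹`. -/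
inductive D3 : Type
  | w3 | x3 | z3 | xinv | zinv
deriving DecidableEq

/-- Relations of `𝒜₁⟨x₁⁻¹, y₁⁻¹⟩`. -/
inductive RelD1 (K : Type) [CommRing K] (t : Kˣ) :
    FreeAlgebra K D1 → FreeAlgebra K D1 → Prop
  | ryx : RelD1 K t (FreeAlgebra.ι K D1.y1 * FreeAlgebra.ι K D1.x1)
      ((((t⁻¹ : Kˣ) : K) ^ 3) • (FreeAlgebra.ι K D1.x1 * FreeAlgebra.ι K D1.y1))
  | rxw : RelD1 K t (FreeAlgebra.ι K D1.x1 * FreeAlgebra.ι K D1.w1)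
      ((((t⁻¹ : Kˣ) : K) ^ 3) • (FreeAlgebra.ι K D1.w1 * FreeAlgebra.ι K D1.x1))
  | rwy : RelD1 K t (FreeAlgebra.ι K D1.w1 * FreeAlgebra.ι K D1.y1)
      ((((t⁻¹ : Kˣ) : K) ^ 3) • (FreeAlgebra.ι K D1.y1 * FreeAlgebra.ι K D1.w1))
  | invx_left : RelD1 K t (FreeAlgebra.ι K D1.xinv * FreeAlgebra.ι K D1.x1) 1
  | invx_right : RelD1 K t (FreeAlgebra.ι K D1.x1 * FreeAlgebra.ι K D1.xinv) 1
  | invy_left : RelD1 K t (FreeAlgebra.ι K D1.yinv * FreeAlgebra.ι K D1.y1) 1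
  | invy_right : RelD1 K t (FreeAlgebra.ι K D1.y1 * FreeAlgebra.ι K D1.yinv) 1

/-- Relations of `𝒜₂⟨z₂⁻¹, y₂⁻¹⟩`. -/
inductive RelD2 (K : Type) [CommRing K] (t : Kˣ) :
    FreeAlgebra K D2 → FreeAlgebra K D2 → Prop
  | rzy : RelD2 K t (FreeAlgebra.ι K D2.z2 * FreeAlgebra.ι K D2.y2)
      ((((t⁻¹ : Kˣ) : K) ^ 3) • (FreeAlgebra.ι K D2.y2 * FreeAlgebra.ι K D2.z2))
  | ryw : RelD2 K t (FreeAlgebra.ι K D2.y2 * FreeAlgebra.ι K D2.w2)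
      ((((t⁻¹ : Kˣ) : K) ^ 3) • (FreeAlgebra.ι K D2.w2 * FreeAlgebra.ι K D2.y2))
  | rwz : RelD2 K t (FreeAlgebra.ι K D2.w2 * FreeAlgebra.ι K D2.z2)
      ((((t⁻¹ : Kˣ) : K) ^ 3) • (FreeAlgebra.ι K D2.z2 * FreeAlgebra.ι K D2.w2))
  | invz_left : RelD2 K t (FreeAlgebra.ι K D2.zinv * FreeAlgebra.ι K D2.z2) 1
  | invz_right : RelD2 K t (FreeAlgebra.ι K D2.z2 * FreeAlgebra.ι K D2.zinv) 1
  | invy_left : RelD2 K t (FreeAlgebra.ι K D2.yinv * FreeAlgebra.ι K D2.y2) 1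
  | invy_right : RelD2 K t (FreeAlgebra.ι K D2.y2 * FreeAlgebra.ι K D2.yinv) 1

/-- Relations of `𝒜₃⟨x₃⁻¹, z₃⁻¹⟩`. -/
inductive RelD3 (K : Type) [CommRing K] (t : Kˣ) :
    FreeAlgebra K D3 → FreeAlgebra K D3 → Prop
  | rxz : RelD3 K t (FreeAlgebra.ι K D3.x3 * FreeAlgebra.ι K D3.z3)
      ((((t⁻¹ : Kˣ) : K) ^ 3) • (FreeAlgebra.ι K D3.z3 * FreeAlgebra.ι K D3.x3))
  | rzw : RelD3 K t (FreeAlgebra.ι K D3.z3 * FreeAlgebra.ι K D3.w3)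
      ((((t⁻¹ : Kˣ) : K) ^ 3) • (FreeAlgebra.ι K D3.w3 * FreeAlgebra.ι K D3.z3))
  | rwx : RelD3 K t (FreeAlgebra.ι K D3.w3 * FreeAlgebra.ι K D3.x3)
      ((((t⁻¹ : Kˣ) : K) ^ 3) • (FreeAlgebra.ι K D3.x3 * FreeAlgebra.ι K D3.w3))
  | invx_left : RelD3 K t (FreeAlgebra.ι K D3.xinv * FreeAlgebra.ι K D3.x3) 1
  | invx_right : RelD3 K t (FreeAlgebra.ι K D3.x3 * FreeAlgebra.ι K D3.xinv) 1
  | invz_left : RelD3 K t (FreeAlgebra.ι K D3.zinv * FreeAlgebra.ι K D3.z3) 1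
  | invz_right : RelD3 K t (FreeAlgebra.ι K D3.z3 * FreeAlgebra.ι K D3.zinv) 1

/-- `𝒜₁⟨x₁⁻¹, y₁⁻¹⟩`. -/
abbrev B1 (K : Type) [CommRing K] (t : Kˣ) := RingQuot (RelD1 K t)
/-- `𝒜₂⟨z₂⁻¹, y₂⁻¹⟩`. -/
abbrev B2 (K : Type) [CommRing K] (t : Kˣ) := RingQuot (RelD2 K t)
/-- `𝒜₃⟨x₃⁻¹, z₃⁻¹⟩`. -/
abbrev B3 (K : Type) [CommRing K] (t : Kˣ) := RingQuot (RelD3 K t)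

/-- image of a generator in `𝒜₁⟨x₁⁻¹, y₁⁻¹⟩`. -/
def d1 (K : Type) [CommRing K] (t : Kˣ) (g : D1) : B1 K t :=
  RingQuot.mkAlgHom K (RelD1 K t) (FreeAlgebra.ι K g)

/-- image of a generator in `𝒜₂⟨z₂⁻¹, y₂⁻¹⟩`. -/
def d2 (K : Type) [CommRing K] (t : Kˣ) (g : D2) : B2 K t :=
  RingQuot.mkAlgHom K (RelD2 K t) (FreeAlgebra.ι K g)

/-- image of a generator in `𝒜₃⟨x₃⁻¹, z₃⁻¹⟩`. -/
def d3 (K : Type) [CommRing K] (t : Kˣ) (g : D3) : B3 K t :=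
  RingQuot.mkAlgHom K (RelD3 K t) (FreeAlgebra.ι K g)

/-! Each transition map sends a generator to a monomial times a power of `s` and `t`, so the
composite `G₁₃ ∘ G₃₂ ∘ G₂₁` sends `x₁, y₁, w₁` to scalar multiples of themselves and it remains to
see that the scalars are `1`.  For `x₁` and `y₁` the adjoined inverses cancel directly.  For `w₁`
one has to reorder `x₃³ (z₃ x₃⁻¹)³` into `z₃³`; every swap of `x₃^{±1}` past `z₃` costs a factor
`t^{∓3}`, and the resulting `t⁻¹⁸` is balanced by the `t`-powers in the images of the `w`'s and of
`z₂³, z₃³`: `27 - 6 - 3 = 18`.  A morphism out of `𝒜₁⟨x₁⁻¹, y₁⁻¹⟩` is determined by its values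
on `x₁, y₁, w₁`, since it then also fixes their inverses. -/

section QuasiCommuting

variable {R A : Type*} [CommSemiring R] [Semiring A] [Algebra R A] {a a' b : A} {c : R}

theorem mul_pow_eq_smul_of_mul_eq_smul (h : a * b = c • (b * a)) :
    ∀ n : ℕ, a * b ^ n = c ^ n • (b ^ n * a)
  | 0 => by simp
  | n + 1 => by
    rw [pow_succ, ← mul_assoc, mul_pow_eq_smul_of_mul_eq_smul h n, smul_mul_assoc, mul_assoc, h,
      mul_smul_comm, smul_smul, ← pow_succ, ← mul_assoc, ← pow_succ]

theorem pow_mul_pow_eq_smul_of_mul_eq_smul (h : a * b = c • (b * a)) (n : ℕ) :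
    ∀ m : ℕ, a ^ m * b ^ n = c ^ (m * n) • (b ^ n * a ^ m)
  | 0 => by simp
  | m + 1 => by
    rw [pow_succ', mul_assoc, pow_mul_pow_eq_smul_of_mul_eq_smul h n m, mul_smul_comm,
      ← mul_assoc, mul_pow_eq_smul_of_mul_eq_smul h, smul_mul_assoc, smul_smul, ← pow_add,
      mul_assoc, ← pow_succ', add_one_mul, add_comm]

theorem mul_pow_eq_smul_pow_mul_pow (h : b * a = c • (a * b)) :
    ∀ n : ℕ, (a * b) ^ n = c ^ n.choose 2 • (a ^ n * b ^ n)
  | 0 => by simp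
  | n + 1 => by
    have hswap : b ^ n * a = c ^ n • (a * b ^ n) := by
      simpa using pow_mul_pow_eq_smul_of_mul_eq_smul h 1 n
    rw [pow_succ, mul_pow_eq_smul_pow_mul_pow h n, smul_mul_assoc, mul_assoc, ← mul_assoc _ a,
      hswap, smul_mul_assoc, mul_smul_comm, smul_smul, ← pow_add]
    congr 1
    · rw [Nat.choose_succ_succ', Nat.choose_one_right, add_comm]
    · rw [pow_succ a, pow_succ b]; simp only [mul_assoc]

theorem mul_inverse_eq_smul_of_mul_eq_smul (h : a * b = c • (b * a)) (hl : a' * a = 1)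
    (hr : a * a' = 1) : b * a' = c • (a' * b) :=
  calc b * a' = a' * (a * b) * a' := by rw [← mul_assoc, hl, one_mul]
    _ = c • (a' * b * (a * a')) := by
      rw [h, mul_smul_comm, smul_mul_assoc]; simp only [mul_assoc]
    _ = c • (a' * b) := by rw [hr, mul_one]

end QuasiCommuting

theorem map_eq_of_mul_eq_one {F M N : Type*} [Monoid M] [Monoid N] [FunLike F M N]
    [MonoidHomClass F M N] (f : F) {a a' : M} {b : N} (h : a' * a = 1) (hb : f a * b = 1) :
    f a' = b :=
  left_inv_eq_right_inv (by rw [← map_mul, h, map_one]) hb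

namespace RingQuot

variable {R X : Type*} [CommSemiring R] {r : FreeAlgebra R X → FreeAlgebra R X → Prop} {a b : X}

theorem mkAlgHom_ι_mul_ι_eq_one (h : r (FreeAlgebra.ι R a * FreeAlgebra.ι R b) 1) :
    mkAlgHom R r (FreeAlgebra.ι R a) * mkAlgHom R r (FreeAlgebra.ι R b) = 1 := by
  simpa using mkAlgHom_rel R h

theorem mkAlgHom_ι_mul_ι_eq_smul {c : R}
    (h : r (FreeAlgebra.ι R a * FreeAlgebra.ι R b) (c • (FreeAlgebra.ι R b * FreeAlgebra.ι R a))) :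
    mkAlgHom R r (FreeAlgebra.ι R a) * mkAlgHom R r (FreeAlgebra.ι R b) =
      c • (mkAlgHom R r (FreeAlgebra.ι R b) * mkAlgHom R r (FreeAlgebra.ι R a)) := by
  simpa using mkAlgHom_rel R h

end RingQuot

section Charts

open RingQuot

variable {K : Type} [CommRing K] {t : Kˣ}

theorem d1_xinv_mul_x1 : d1 K t D1.xinv * d1 K t D1.x1 = 1 :=
  mkAlgHom_ι_mul_ι_eq_one RelD1.invx_left

theorem d1_x1_mul_xinv : d1 K t D1.x1 * d1 K t D1.xinv = 1 :=
  mkAlgHom_ι_mul_ι_eq_one RelD1.invx_right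

theorem d1_yinv_mul_y1 : d1 K t D1.yinv * d1 K t D1.y1 = 1 :=
  mkAlgHom_ι_mul_ι_eq_one RelD1.invy_left

theorem d1_y1_mul_yinv : d1 K t D1.y1 * d1 K t D1.yinv = 1 :=
  mkAlgHom_ι_mul_ι_eq_one RelD1.invy_right

theorem d2_zinv_mul_z2 : d2 K t D2.zinv * d2 K t D2.z2 = 1 :=
  mkAlgHom_ι_mul_ι_eq_one RelD2.invz_left

theorem d3_xinv_mul_x3 : d3 K t D3.xinv * d3 K t D3.x3 = 1 :=
  mkAlgHom_ι_mul_ι_eq_one RelD3.invx_left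

theorem d3_x3_mul_xinv : d3 K t D3.x3 * d3 K t D3.xinv = 1 :=
  mkAlgHom_ι_mul_ι_eq_one RelD3.invx_right

theorem d3_zinv_mul_z3 : d3 K t D3.zinv * d3 K t D3.z3 = 1 :=
  mkAlgHom_ι_mul_ι_eq_one RelD3.invz_left

theorem d3_z3_mul_zinv : d3 K t D3.z3 * d3 K t D3.zinv = 1 :=
  mkAlgHom_ι_mul_ι_eq_one RelD3.invz_right

theorem d3_x3_mul_z3 :
    d3 K t D3.x3 * d3 K t D3.z3 = ((t⁻¹ : Kˣ) : K) ^ 3 • (d3 K t D3.z3 * d3 K t D3.x3) :=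
  mkAlgHom_ι_mul_ι_eq_smul RelD3.rxz

theorem d3_x3_pow_mul_z3_mul_xinv_pow :
    d3 K t D3.x3 ^ 3 * (d3 K t D3.z3 * d3 K t D3.xinv) ^ 3
      = ((t⁻¹ : Kˣ) : K) ^ 18 • d3 K t D3.z3 ^ 3 := by
  have hswap : d3 K t D3.xinv * d3 K t D3.z3 = (t : K) ^ 3 • (d3 K t D3.z3 * d3 K t D3.xinv) := by
    rw [mul_inverse_eq_smul_of_mul_eq_smul d3_x3_mul_z3 d3_xinv_mul_x3 d3_x3_mul_xinv, smul_smul,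
      ← mul_pow, Units.mul_inv, one_pow, one_smul]
  rw [mul_pow_eq_smul_pow_mul_pow hswap, mul_smul_comm, ← mul_assoc,
    pow_mul_pow_eq_smul_of_mul_eq_smul d3_x3_mul_z3, smul_mul_assoc, mul_assoc,
    pow_mul_pow_eq_one 3 d3_x3_mul_xinv, mul_one, smul_smul]
  congr 1
  rw [show (3 : ℕ).choose 2 = 3 from rfl]
  grind [Units.inv_mul]

theorem algHom_B1_eq_id (φ : B1 K t →ₐ[K] B1 K t) (hx : φ (d1 K t D1.x1) = d1 K t D1.x1)
    (hy : φ (d1 K t D1.y1) = d1 K t D1.y1) (hw : φ (d1 K t D1.w1) = d1 K t D1.w1) :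
    φ = AlgHom.id K (B1 K t) := by
  have hxinv : φ (d1 K t D1.xinv) = d1 K t D1.xinv :=
    map_eq_of_mul_eq_one φ d1_xinv_mul_x1 (by rw [hx, d1_x1_mul_xinv])
  have hyinv : φ (d1 K t D1.yinv) = d1 K t D1.yinv :=
    map_eq_of_mul_eq_one φ d1_yinv_mul_y1 (by rw [hy, d1_y1_mul_yinv])
  refine ringQuot_ext' K _ _ (FreeAlgebra.hom_ext (funext fun g => ?_))
  cases g
  exacts [hw, hy, hx, hxinv, hyinv]

end Charts

section Transitions

variable {K : Type} [CommRing K] {s t : Kˣ}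

theorem map_d2_zinv (G32 : B2 K t →ₐ[K] B3 K t)
    (hG32z : G32 (d2 K t D2.z2)
      = (((s⁻¹ : Kˣ) : K) * ((t⁻¹ : Kˣ) : K) ^ 2) • (d3 K t D3.z3 * d3 K t D3.xinv)) :
    G32 (d2 K t D2.zinv) = ((s : K) * (t : K) ^ 2) • (d3 K t D3.x3 * d3 K t D3.zinv) := by
  refine map_eq_of_mul_eq_one G32 d2_zinv_mul_z2 ?_
  rw [hG32z, smul_mul_smul_comm, mul_assoc (d3 K t D3.z3), ← mul_assoc (d3 K t D3.xinv),
    d3_xinv_mul_x3, one_mul, d3_z3_mul_zinv]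
  convert one_smul K (1 : B3 K t) using 2
  grind [Units.inv_mul]

theorem map_d3_zinv (G13 : B3 K t →ₐ[K] B1 K t)
    (hG13z : G13 (d3 K t D3.z3)
      = (((s⁻¹ : Kˣ) : K) ^ 2 * ((t⁻¹ : Kˣ) : K)) • d1 K t D1.yinv) :
    G13 (d3 K t D3.zinv) = ((s : K) ^ 2 * (t : K)) • d1 K t D1.y1 := by
  refine map_eq_of_mul_eq_one G13 d3_zinv_mul_z3 ?_
  rw [hG13z, smul_mul_smul_comm, d1_yinv_mul_y1]
  convert one_smul K (1 : B1 K t) using 2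
  grind [Units.inv_mul]

theorem cocycle_apply_x1 (G21 : B1 K t →ₐ[K] B2 K t) (G32 : B2 K t →ₐ[K] B3 K t)
    (G13 : B3 K t →ₐ[K] B1 K t)
    (hG21x : G21 (d1 K t D1.x1)
      = (((s⁻¹ : Kˣ) : K) ^ 2 * ((t⁻¹ : Kˣ) : K)) • d2 K t D2.zinv)
    (hG32zinv : G32 (d2 K t D2.zinv) = ((s : K) * (t : K) ^ 2) • (d3 K t D3.x3 * d3 K t D3.zinv))
    (hG13x : G13 (d3 K t D3.x3)
      = (((s⁻¹ : Kˣ) : K) * ((t⁻¹ : Kˣ) : K) ^ 2) • (d1 K t D1.x1 * d1 K t D1.yinv))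
    (hG13zinv : G13 (d3 K t D3.zinv) = ((s : K) ^ 2 * (t : K)) • d1 K t D1.y1) :
    G13 (G32 (G21 (d1 K t D1.x1))) = d1 K t D1.x1 := by
  rw [hG21x, map_smul, hG32zinv, map_smul, map_smul, map_mul, hG13x, hG13zinv,
    smul_mul_smul_comm, mul_assoc (d1 K t D1.x1), d1_yinv_mul_y1, mul_one, smul_smul, smul_smul]
  convert one_smul K (d1 K t D1.x1) using 2
  grind [Units.inv_mul]

theorem cocycle_apply_y1 (G21 : B1 K t →ₐ[K] B2 K t) (G32 : B2 K t →ₐ[K] B3 K t)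
    (G13 : B3 K t →ₐ[K] B1 K t)
    (hG21y : G21 (d1 K t D1.y1)
      = (((s⁻¹ : Kˣ) : K) * ((t⁻¹ : Kˣ) : K) ^ 2) • (d2 K t D2.y2 * d2 K t D2.zinv))
    (hG32y : G32 (d2 K t D2.y2)
      = (((s⁻¹ : Kˣ) : K) ^ 2 * ((t⁻¹ : Kˣ) : K)) • d3 K t D3.xinv)
    (hG32zinv : G32 (d2 K t D2.zinv) = ((s : K) * (t : K) ^ 2) • (d3 K t D3.x3 * d3 K t D3.zinv))
    (hG13zinv : G13 (d3 K t D3.zinv) = ((s : K) ^ 2 * (t : K)) • d1 K t D1.y1) :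
    G13 (G32 (G21 (d1 K t D1.y1))) = d1 K t D1.y1 := by
  rw [hG21y, map_smul, map_mul, hG32y, hG32zinv, smul_mul_smul_comm,
    ← mul_assoc (d3 K t D3.xinv), d3_xinv_mul_x3, one_mul, map_smul, map_smul, hG13zinv,
    smul_smul, smul_smul]
  convert one_smul K (d1 K t D1.y1) using 2
  grind [Units.inv_mul]

theorem cocycle_apply_w1 (G21 : B1 K t →ₐ[K] B2 K t) (G32 : B2 K t →ₐ[K] B3 K t)
    (G13 : B3 K t →ₐ[K] B1 K t)
    (hG21w : G21 (d1 K t D1.w1)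
      = (((s : Kˣ) : K) ^ 3 * ((t : Kˣ) : K) ^ 9) • (d2 K t D2.w2 * d2 K t D2.z2 ^ 3))
    (hG32z : G32 (d2 K t D2.z2)
      = (((s⁻¹ : Kˣ) : K) * ((t⁻¹ : Kˣ) : K) ^ 2) • (d3 K t D3.z3 * d3 K t D3.xinv))
    (hG32w : G32 (d2 K t D2.w2)
      = (((s : Kˣ) : K) ^ 3 * ((t : Kˣ) : K) ^ 9) • (d3 K t D3.w3 * d3 K t D3.x3 ^ 3))
    (hG13z : G13 (d3 K t D3.z3)
      = (((s⁻¹ : Kˣ) : K) ^ 2 * ((t⁻¹ : Kˣ) : K)) • d1 K t D1.yinv)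
    (hG13w : G13 (d3 K t D3.w3)
      = (((s : Kˣ) : K) ^ 3 * ((t : Kˣ) : K) ^ 9) • (d1 K t D1.w1 * d1 K t D1.y1 ^ 3)) :
    G13 (G32 (G21 (d1 K t D1.w1))) = d1 K t D1.w1 := by
  have hG32w1 : G32 (G21 (d1 K t D1.w1))
      = ((s : K) ^ 3 * ((t⁻¹ : Kˣ) : K) ^ 6) • (d3 K t D3.w3 * d3 K t D3.z3 ^ 3) := by
    rw [hG21w, map_smul, map_mul, map_pow, hG32w, hG32z, smul_pow, smul_mul_smul_comm,
      mul_assoc (d3 K t D3.w3), d3_x3_pow_mul_z3_mul_xinv_pow, mul_smul_comm, smul_smul, smul_smul]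
    congr 1
    grind [Units.inv_mul]
  rw [hG32w1, map_smul, map_mul, map_pow, hG13w, hG13z, smul_pow, smul_mul_smul_comm,
    mul_assoc (d1 K t D1.w1), pow_mul_pow_eq_one 3 d1_y1_mul_yinv, mul_one, smul_smul]
  convert one_smul K (d1 K t D1.w1) using 2
  grind [Units.inv_mul]

end Transitions

/-- Cocycle condition for the noncommutative `K_{ℙ²}`: if
`G₂₁ : 𝒜₁⟨x₁⁻¹,y₁⁻¹⟩ → 𝒜₂⟨z₂⁻¹,y₂⁻¹⟩`, `G₃₂ : 𝒜₂⟨z₂⁻¹,y₂⁻¹⟩ → 𝒜₃⟨x₃⁻¹,z₃⁻¹⟩` and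
`G₁₃ : 𝒜₃⟨x₃⁻¹,z₃⁻¹⟩ → 𝒜₁⟨y₁⁻¹,x₁⁻¹⟩` are the (extended) transition homomorphisms, then
`G₁₃ ∘ G₃₂ ∘ G₂₁` is the identity on `𝒜₁⟨x₁⁻¹,y₁⁻¹⟩`; equivalently
`G₁₃(G₃₂(G₂₁(u))) = u` for `u ∈ {x₁, y₁, w₁}`.  Hence the three charts satisfy the cocycle
condition `G_{ij} ∘ G_{jk} = G_{ik}` with trivial gerbe terms. -/
theorem nc_KP2_cocycle (K : Type) [CommRing K] (s t : Kˣ)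
    (G21 : B1 K t →ₐ[K] B2 K t)
    (hG21x : G21 (d1 K t D1.x1)
      = (((s⁻¹ : Kˣ) : K) ^ 2 * ((t⁻¹ : Kˣ) : K)) • d2 K t D2.zinv)
    (hG21y : G21 (d1 K t D1.y1)
      = (((s⁻¹ : Kˣ) : K) * ((t⁻¹ : Kˣ) : K) ^ 2) • (d2 K t D2.y2 * d2 K t D2.zinv))
    (hG21w : G21 (d1 K t D1.w1)
      = (((s : Kˣ) : K) ^ 3 * ((t : Kˣ) : K) ^ 9) • (d2 K t D2.w2 * d2 K t D2.z2 ^ 3))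
    (G32 : B2 K t →ₐ[K] B3 K t)
    (hG32y : G32 (d2 K t D2.y2)
      = (((s⁻¹ : Kˣ) : K) ^ 2 * ((t⁻¹ : Kˣ) : K)) • d3 K t D3.xinv)
    (hG32z : G32 (d2 K t D2.z2)
      = (((s⁻¹ : Kˣ) : K) * ((t⁻¹ : Kˣ) : K) ^ 2) • (d3 K t D3.z3 * d3 K t D3.xinv))
    (hG32w : G32 (d2 K t D2.w2)
      = (((s : Kˣ) : K) ^ 3 * ((t : Kˣ) : K) ^ 9) • (d3 K t D3.w3 * d3 K t D3.x3 ^ 3))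
    (G13 : B3 K t →ₐ[K] B1 K t)
    (hG13z : G13 (d3 K t D3.z3)
      = (((s⁻¹ : Kˣ) : K) ^ 2 * ((t⁻¹ : Kˣ) : K)) • d1 K t D1.yinv)
    (hG13x : G13 (d3 K t D3.x3)
      = (((s⁻¹ : Kˣ) : K) * ((t⁻¹ : Kˣ) : K) ^ 2) • (d1 K t D1.x1 * d1 K t D1.yinv))
    (hG13w : G13 (d3 K t D3.w3)
      = (((s : Kˣ) : K) ^ 3 * ((t : Kˣ) : K) ^ 9) • (d1 K t D1.w1 * d1 K t D1.y1 ^ 3)) :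
    G13.comp (G32.comp G21) = AlgHom.id K (B1 K t)
    ∧ G13 (G32 (G21 (d1 K t D1.x1))) = d1 K t D1.x1
    ∧ G13 (G32 (G21 (d1 K t D1.y1))) = d1 K t D1.y1
    ∧ G13 (G32 (G21 (d1 K t D1.w1))) = d1 K t D1.w1 := by
  have hG32zinv := map_d2_zinv G32 hG32z
  have hG13zinv := map_d3_zinv G13 hG13z
  have hx := cocycle_apply_x1 G21 G32 G13 hG21x hG32zinv hG13x hG13zinv
  have hy := cocycle_apply_y1 G21 G32 G13 hG21y hG32y hG32zinv hG13zinv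
  have hw := cocycle_apply_w1 G21 G32 G13 hG21w hG32z hG32w hG13z hG13w
  exact ⟨algHom_B1_eq_id _ hx hy hw, hx, hy, hw⟩
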